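/- For any core allocation x of the arboricity game with nonempty core, and any two edges e, f belonging to the same prime set P of the prime partition of G, we have x_e = x_f. -/

import Mathlib

open scoped BigOperators

variable {V : Type*}

/-- Density of a subgraph: m(H)/(n(H)-1). -/
noncomputable def density (G : SimpleGraph V) (H : G.Subgraph) : ℝ :=
  (H.edgeSet.ncard : ℝ) / ((H.verts.ncard : ℝ) - 1)

/-- Fractional arboricity: maximum density over connected subgraphs. -/
noncomputable def fracArboricity (G : SimpleGraph V) : ℝ :=
  sSup {d : ℝ | ∃ H : G.Subgraph, H.Connected ∧ d = density G H}

/-- A densest subgraph: connected, attaining the maximum density. -/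
def IsDensest (G : SimpleGraph V) (H : G.Subgraph) : Prop :=
  H.Connected ∧ density G H = fracArboricity G

/-- A minimal densest subgraph: no proper subgraph is densest. -/
def IsMinimalDensest (G : SimpleGraph V) (H : G.Subgraph) : Prop :=
  IsDensest G H ∧ ∀ K : G.Subgraph, K < H → ¬ IsDensest G K
/-- A set of edges is a forest if the graph it spans is acyclic. -/
def IsForestEdgeSet (F : Set (Sym2 V)) : Prop :=
  (SimpleGraph.fromEdgeSet F).IsAcyclic

/-- Arboricity of an edge set: minimum number of forests covering it. -/
noncomputable def arboricity (S : Set (Sym2 V)) : ℕ :=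
  sInf {k : ℕ | ∃ F : Fin k → Set (Sym2 V),
    (∀ i, IsForestEdgeSet (F i)) ∧ S ⊆ ⋃ i, F i}

/-- A spanning tree of `G`, as a subgraph. -/
def IsSpanningTree (G : SimpleGraph V) (T : G.Subgraph) : Prop :=
  T.IsSpanning ∧ T.coe.IsTree

/-- Membership in the core of the arboricity game on `G`:
nonnegative, efficient, and no coalition pays more than its arboricity. -/
def inCore (G : SimpleGraph V) (x : Sym2 V → ℝ) : Prop :=
  (∀ e, 0 ≤ x e) ∧ (∑ᶠ e ∈ G.edgeSet, x e) = (arboricity G.edgeSet : ℝ) ∧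
    ∀ S : Set (Sym2 V), S ⊆ G.edgeSet → (∑ᶠ e ∈ S, x e) ≤ (arboricity S : ℝ)

/-!
Fix a core allocation `x` and let `k = a(G)`. Disjointifying an optimal cover of `E(G)` by `k`
forests gives disjoint forests `F₁, …, F_k` of total weight `x(E(G)) = k`; since every forest
weighs at most `1` in the core, each `Fᵢ` weighs exactly `1`, so it is a maximum-weight forest.
If `e, f ∈ P` had `x f < x e =: θ`, let `D` be the component through `e` of the graph of edges of
weight at least `θ`. By the exchange property of maximum-weight forests every `Fᵢ` spans `D`, so
`D` has at least `k (n(D) - 1)` edges and is densest. By noncrossing `f` lies in `D`, so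
`x f ≥ θ`.
-/

open SimpleGraph Function

section Forests

variable {F S : Set (Sym2 V)}

lemma IsForestEdgeSet.mono (h : S ⊆ F) (hF : IsForestEdgeSet F) : IsForestEdgeSet S :=
  IsAcyclic.anti (fromEdgeSet_mono h) hF

lemma IsForestEdgeSet.insert_of_not_reachable (hF : IsForestEdgeSet F) {p q : V}
    (h : ¬ (fromEdgeSet F).Reachable p q) : IsForestEdgeSet (insert s(p, q) F) := by
  have : fromEdgeSet (insert s(p, q) F) = fromEdgeSet F ⊔ edge p q := by
    rw [edge, ← fromEdgeSet_union, Set.insert_eq, Set.union_comm]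
  rw [IsForestEdgeSet, this]
  exact IsAcyclic.sup_edge_of_not_reachable h hF

lemma isForestEdgeSet_singleton (g : Sym2 V) : IsForestEdgeSet {g} := by
  induction g using Sym2.ind with | _ p q =>
  by_cases hpq : p = q
  · rw [IsForestEdgeSet, ← edge, hpq, edge_self_eq_bot]
    exact isAcyclic_bot
  · have hempty : IsForestEdgeSet (∅ : Set (Sym2 V)) := by
      simp [IsForestEdgeSet]
    simpa using hempty.insert_of_not_reachable (p := p) (q := q) (by simpa [reachable_bot])

lemma IsForestEdgeSet.not_reachable_diff_singleton (hF : IsForestEdgeSet F) {p q : V}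
    (w : (fromEdgeSet F).Path p q) {g : Sym2 V} (hg : g ∈ w.1.edges) :
    ¬ (fromEdgeSet (F \ {g})).Reachable p q := by
  classical
  rintro ⟨w'⟩
  let w'' : (fromEdgeSet F).Path p q :=
    ⟨w'.toPath.1.mapLe (fromEdgeSet_mono Set.sdiff_subset), w'.toPath.2.mapLe _⟩
  have hg' : g ∈ w'.toPath.1.edges := by
    simpa [w'', (hF.subsingleton_path p q).elim w w''] using hg
  have := w'.toPath.1.edges_subset_edgeSet hg'
  rw [edgeSet_fromEdgeSet] at this
  exact this.1.2 rfl

lemma arboricity_le_one (hF : IsForestEdgeSet F) : arboricity F ≤ 1 :=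
  Nat.sInf_le ⟨fun _ => F, fun _ => hF, fun _ hg => Set.mem_iUnion.2 ⟨0, hg⟩⟩

lemma exists_forest_cover_arboricity [Finite V] (S : Set (Sym2 V)) :
    ∃ F : Fin (arboricity S) → Set (Sym2 V), (∀ i, IsForestEdgeSet (F i)) ∧ S ⊆ ⋃ i, F i := by
  let e := Finite.equivFin (Sym2 V)
  have hcover : {k | ∃ F : Fin k → Set (Sym2 V),
      (∀ i, IsForestEdgeSet (F i)) ∧ S ⊆ ⋃ i, F i}.Nonempty :=
    ⟨Nat.card (Sym2 V), fun i => {e.symm i}, fun _ => isForestEdgeSet_singleton _,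
      fun g _ => Set.mem_iUnion.2 ⟨e g, by simp⟩⟩
  exact Nat.sInf_mem hcover

def IsMaxWeightForest (x : Sym2 V → ℝ) (E F : Set (Sym2 V)) : Prop :=
  IsForestEdgeSet F ∧ F ⊆ E ∧ ∀ S ⊆ E, IsForestEdgeSet S → ∑ᶠ g ∈ S, x g ≤ ∑ᶠ g ∈ F, x g

/-- Otherwise adding `s(p, q)` to `F`, or exchanging it for a light edge of the `F`-path from `p`
to `q`, would give a heavier forest. -/
lemma IsMaxWeightForest.reachable [Finite V] {x : Sym2 V → ℝ} {E : Set (Sym2 V)}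
    (hF : IsMaxWeightForest x E F) {θ : ℝ} (hθ : 0 < θ) {p q : V} (hpq : s(p, q) ∈ E)
    (hθpq : θ ≤ x s(p, q)) : (fromEdgeSet {g ∈ F | θ ≤ x g}).Reachable p q := by
  classical
  obtain ⟨hforest, hFE, hmax⟩ := hF
  have hexchange : ∀ F' ⊆ F, s(p, q) ∉ F' → ¬ (fromEdgeSet F').Reachable p q →
      ∑ᶠ g ∈ F', x g + x s(p, q) ≤ ∑ᶠ g ∈ F, x g := by
    intro F' hF' hpqF' hnr
    have := hmax _ (Set.insert_subset hpq (hF'.trans hFE))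
      ((hforest.mono hF').insert_of_not_reachable hnr)
    rwa [finsum_mem_insert _ hpqF' (Set.toFinite _), add_comm] at this
  by_cases hpqF : s(p, q) ∈ F
  · rcases eq_or_ne p q with rfl | hne
    · rfl
    · have : s(p, q) ∈ {g ∈ F | θ ≤ x g} := ⟨hpqF, hθpq⟩
      exact ((fromEdgeSet_adj _).2 ⟨this, hne⟩).reachable
  have hreach : (fromEdgeSet F).Reachable p q := by
    by_contra hnr
    linarith [hexchange F le_rfl hpqF hnr]
  obtain ⟨w, hw⟩ := hreach.exists_isPath
  by_cases hheavy : ∀ g ∈ w.edges, θ ≤ x g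
  · refine ⟨w.transfer _ fun g hg => ?_⟩
    have := w.edges_subset_edgeSet hg
    rw [edgeSet_fromEdgeSet] at this ⊢
    exact ⟨⟨this.1, hheavy g hg⟩, this.2⟩
  push Not at hheavy
  obtain ⟨g, hgw, hxg⟩ := hheavy
  have hgF : g ∈ F := by
    have := w.edges_subset_edgeSet hgw
    rw [edgeSet_fromEdgeSet] at this
    exact this.1
  have hsplit : ∑ᶠ h ∈ F, x h = x g + ∑ᶠ h ∈ F \ {g}, x h := by
    rw [← finsum_mem_insert _ (fun h => h.2 rfl) (Set.toFinite _), Set.insert_sdiff_singleton,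
      Set.insert_eq_of_mem hgF]
  have := hexchange (F \ {g}) Set.sdiff_subset (fun h => hpqF h.1)
    (hforest.not_reachable_diff_singleton ⟨w, hw⟩ hgw)
  linarith

end Forests

namespace SimpleGraph

lemma Reachable.of_forall_adj_reachable {G H : SimpleGraph V}
    (h : ∀ a b, G.Adj a b → H.Reachable a b) {u v : V} (huv : G.Reachable u v) :
    H.Reachable u v := by
  obtain ⟨w⟩ := huv
  induction w with
  | nil => rfl
  | cons hadj _ ih => exact (h _ _ hadj).trans ih

lemma ConnectedComponent.ncard_supp_le_ncard_add_one {G : SimpleGraph V}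
    (C : G.ConnectedComponent) {s : Set (Sym2 V)} (hs : s.Finite)
    (h : ∀ a b, G.Adj a b → a ∈ C.supp → s(a, b) ∈ s) : C.supp.ncard ≤ s.ncard + 1 := by
  have := hs.to_subtype
  have hedges : Nat.card C.toSimpleGraph.edgeSet ≤ s.ncard := by
    refine Nat.card_le_card_of_injective (fun e => ⟨Sym2.map Subtype.val e.1, ?_⟩) ?_
    · obtain ⟨e, he⟩ := e
      induction e using Sym2.ind with | _ a b =>
      exact h a b he a.2
    · intro e e' hee
      exact Subtype.ext (Sym2.map.injective Subtype.val_injective (congrArg Subtype.val hee))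
  exact C.connected_toSimpleGraph.card_vert_le_card_edgeSet_add_one.trans
    (Nat.add_le_add_right hedges 1)

end SimpleGraph

section CoreAllocation

variable {G : SimpleGraph V} {x : Sym2 V → ℝ}

lemma inCore.finsum_le_one (hx : inCore G x) {S : Set (Sym2 V)} (hSE : S ⊆ G.edgeSet)
    (hS : IsForestEdgeSet S) : ∑ᶠ g ∈ S, x g ≤ 1 :=
  (hx.2.2 S hSE).trans (by exact_mod_cast arboricity_le_one hS)

/-- Disjointify an optimal forest cover: the weights of its `arboricity G.edgeSet` forests then
sum to `arboricity G.edgeSet`, and each is at most `1`, the bound for every forest. -/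
lemma inCore.exists_disjoint_isMaxWeightForest [Finite V] (hx : inCore G x) :
    ∃ F : Fin (arboricity G.edgeSet) → Set (Sym2 V),
      Pairwise (Disjoint on F) ∧ ∀ i, IsMaxWeightForest x G.edgeSet (F i) := by
  obtain ⟨F₀, hF₀, hcover⟩ := exists_forest_cover_arboricity G.edgeSet
  set F := disjointed fun i => F₀ i ∩ G.edgeSet
  have hFsub i : F i ⊆ F₀ i ∩ G.edgeSet := disjointed_le _ i
  have hforest i : IsForestEdgeSet (F i) := (hF₀ i).mono ((hFsub i).trans Set.inter_subset_left)
  have hFE i : F i ⊆ G.edgeSet := (hFsub i).trans Set.inter_subset_right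
  have hunion : ⋃ i, F i = G.edgeSet := by
    rw [iUnion_disjointed, ← Set.iUnion_inter, Set.inter_eq_right.2 hcover]
  have hsum : ∑ i, ∑ᶠ g ∈ F i, x g = ∑ _i : Fin (arboricity G.edgeSet), (1 : ℝ) := by
    rw [← finsum_eq_sum_of_fintype, ← finsum_mem_iUnion (disjoint_disjointed _)
      (fun _ => Set.toFinite _), hunion, hx.2.1]
    simp
  have hweight i : ∑ᶠ g ∈ F i, x g = 1 :=
    (Finset.sum_eq_sum_iff_of_le fun i _ => hx.finsum_le_one (hFE i) (hforest i)).1 hsum i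
      (Finset.mem_univ i)
  exact ⟨F, disjoint_disjointed _, fun i => ⟨hforest i, hFE i,
    fun S hSE hS => (hweight i).symm ▸ hx.finsum_le_one hSE hS⟩⟩

end CoreAllocation

namespace SimpleGraph

variable {G : SimpleGraph V} {x : Sym2 V → ℝ} {θ : ℝ} {u v : V}

def thresholdGraph (G : SimpleGraph V) (x : Sym2 V → ℝ) (θ : ℝ) : SimpleGraph V :=
  fromEdgeSet {g ∈ G.edgeSet | θ ≤ x g}

lemma thresholdGraph_le : G.thresholdGraph x θ ≤ G :=
  fun _ _ h => ((fromEdgeSet_adj _).1 h).1.1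

def thresholdComponent (G : SimpleGraph V) (x : Sym2 V → ℝ) (θ : ℝ) (u : V) : G.Subgraph :=
  (toSubgraph (G.thresholdGraph x θ) thresholdGraph_le).induce
    ((G.thresholdGraph x θ).connectedComponentMk u).supp

lemma thresholdComponent_adj {a b : V} :
    (G.thresholdComponent x θ u).Adj a b ↔ (G.thresholdGraph x θ).Adj a b ∧
      a ∈ ((G.thresholdGraph x θ).connectedComponentMk u).supp := by
  show _ ∧ _ ∧ _ ↔ _
  refine ⟨fun h => ⟨h.2.2, h.1⟩, fun h => ⟨h.2, ?_, h.1⟩⟩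
  exact (ConnectedComponent.mem_supp_congr_adj _ h.1).1 h.2

lemma thresholdComponent_connected : (G.thresholdComponent x θ u).Connected := by
  let C := (G.thresholdGraph x θ).connectedComponentMk u
  let f : C.toSimpleGraph →g (G.thresholdComponent x θ u).coe :=
    ⟨fun v => ⟨v.1, v.2⟩, fun {v _} h => thresholdComponent_adj.2 ⟨h, v.2⟩⟩
  exact ⟨C.connected_toSimpleGraph.map f fun v => ⟨⟨v.1, v.2⟩, rfl⟩⟩

lemma le_of_mem_edgeSet_thresholdComponent {g : Sym2 V}
    (hg : g ∈ (G.thresholdComponent x θ u).edgeSet) : θ ≤ x g := by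
  induction g using Sym2.ind with | _ a b =>
  exact ((fromEdgeSet_adj _).1 (thresholdComponent_adj.1 hg).1).1.2

lemma mem_edgeSet_thresholdComponent (huv : G.Adj u v) (hθ : θ ≤ x s(u, v)) :
    s(u, v) ∈ (G.thresholdComponent x θ u).edgeSet :=
  thresholdComponent_adj.2
    ⟨(fromEdgeSet_adj _).2 ⟨⟨huv, hθ⟩, huv.ne⟩, ConnectedComponent.connectedComponentMk_mem⟩

lemma two_le_ncard_verts_thresholdComponent [Finite V] (huv : G.Adj u v) (hθ : θ ≤ x s(u, v)) :
    2 ≤ (G.thresholdComponent x θ u).verts.ncard := by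
  have hedge := (mem_edgeSet_thresholdComponent huv hθ : (G.thresholdComponent x θ u).Adj u v)
  rw [← Set.ncard_pair huv.ne]
  exact Set.ncard_le_ncard (Set.pair_subset hedge.fst_mem hedge.snd_mem)

/-- `F` spans the component: by the exchange property the ends of each of its edges are joined
through heavy edges of `F`. -/
lemma IsMaxWeightForest.ncard_verts_thresholdComponent_le [Finite V] {F : Set (Sym2 V)}
    (hF : IsMaxWeightForest x G.edgeSet F) (hθ : 0 < θ) :
    (G.thresholdComponent x θ u).verts.ncard ≤
      (F ∩ (G.thresholdComponent x θ u).edgeSet).ncard + 1 := by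
  set A := fromEdgeSet {g ∈ F | θ ≤ x g}
  have hAle : A ≤ G.thresholdGraph x θ := fromEdgeSet_mono fun g hg => ⟨hF.2.1 hg.1, hg.2⟩
  have hsupp : (A.connectedComponentMk u).supp =
      ((G.thresholdGraph x θ).connectedComponentMk u).supp := by
    ext w
    simp only [ConnectedComponent.mem_supp_iff, ConnectedComponent.eq]
    refine ⟨fun h => h.mono hAle, fun h => h.of_forall_adj_reachable fun a b hab => ?_⟩
    have := ((fromEdgeSet_adj _).1 hab).1
    exact hF.reachable hθ this.1 this.2
  change ((G.thresholdGraph x θ).connectedComponentMk u).supp.ncard ≤ _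
  rw [← hsupp]
  refine (A.connectedComponentMk u).ncard_supp_le_ncard_add_one (Set.toFinite _)
    fun a b hab ha => ⟨((fromEdgeSet_adj _).1 hab).1.1, ?_⟩
  exact thresholdComponent_adj.2 ⟨hAle hab, hsupp ▸ ha⟩

end SimpleGraph

section Density

variable {G : SimpleGraph V}

lemma density_le_ncard_edgeSet (H : G.Subgraph) : density G H ≤ H.edgeSet.ncard := by
  rw [density]
  rcases Nat.lt_or_ge H.verts.ncard 2 with h | h
  · have : (H.verts.ncard : ℝ) ≤ 1 := by exact_mod_cast Nat.lt_succ_iff.1 h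
    exact (div_nonpos_of_nonneg_of_nonpos (Nat.cast_nonneg _) (by linarith)).trans
      (Nat.cast_nonneg _)
  · have : (2 : ℝ) ≤ H.verts.ncard := by exact_mod_cast h
    exact div_le_self (Nat.cast_nonneg _) (by linarith)

lemma density_le_fracArboricity [Finite V] {H : G.Subgraph} (hH : H.Connected) :
    density G H ≤ fracArboricity G := by
  refine le_csSup ⟨Nat.card (Sym2 V), ?_⟩ ⟨H, hH, rfl⟩
  rintro _ ⟨K, -, rfl⟩
  exact (density_le_ncard_edgeSet K).trans (by exact_mod_cast Set.ncard_le_card _)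

lemma le_density {H : G.Subgraph} {c : ℝ} (h : 2 ≤ H.verts.ncard)
    (hc : c * (H.verts.ncard - 1 : ℝ) ≤ H.edgeSet.ncard) : c ≤ density G H := by
  have : (2 : ℝ) ≤ H.verts.ncard := by exact_mod_cast h
  rwa [density, le_div_iff₀ (by linarith)]

lemma card_le_density_thresholdComponent [Finite V] {ι : Type*} [Fintype ι] {x : Sym2 V → ℝ}
    {F : ι → Set (Sym2 V)} (hdisj : Pairwise (Disjoint on F))
    (hF : ∀ i, IsMaxWeightForest x G.edgeSet (F i)) {θ : ℝ} (hθ : 0 < θ) {u v : V}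
    (huv : G.Adj u v) (hθuv : θ ≤ x s(u, v)) :
    (Fintype.card ι : ℝ) ≤ density G (G.thresholdComponent x θ u) := by
  have hD := two_le_ncard_verts_thresholdComponent huv hθuv
  have hspan i := (hF i).ncard_verts_thresholdComponent_le (u := u) hθ
  set D := G.thresholdComponent x θ u
  have hunion : ∑ i, (F i ∩ D.edgeSet).ncard ≤ D.edgeSet.ncard := by
    rw [← finsum_eq_sum_of_fintype, ← Set.ncard_iUnion_of_finite (fun _ => Set.toFinite _)
      fun i j hij => (hdisj hij).mono Set.inter_subset_left Set.inter_subset_left]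
    exact Set.ncard_le_ncard (Set.iUnion_subset fun i => Set.inter_subset_right)
  have hedges : Fintype.card ι * (D.verts.ncard - 1) ≤ D.edgeSet.ncard :=
    calc Fintype.card ι * (D.verts.ncard - 1) = ∑ _i : ι, (D.verts.ncard - 1) := by simp
      _ ≤ ∑ i, (F i ∩ D.edgeSet).ncard := Finset.sum_le_sum fun i _ =>
        Nat.sub_le_iff_le_add.2 (hspan i)
      _ ≤ D.edgeSet.ncard := hunion
  refine le_density hD ?_
  have := (Nat.cast_le (α := ℝ)).2 hedges
  push_cast [Nat.cast_sub (by omega : 1 ≤ D.verts.ncard)] at this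
  exact this

end Density

theorem core_constant_on_prime_set_general [Fintype V] (G : SimpleGraph V)
    (hcore : fracArboricity G = (arboricity G.edgeSet : ℝ))
    (P : Set (Sym2 V)) (hPE : P ⊆ G.edgeSet)
    (hP : ∀ H : G.Subgraph, IsDensest G H → P ⊆ H.edgeSet ∨ P ∩ H.edgeSet = ∅)
    (x : Sym2 V → ℝ) (hx : inCore G x) (e f : Sym2 V) (he : e ∈ P) (hf : f ∈ P) :
    x e = x f := by
  obtain ⟨F, hFdisj, hF⟩ := hx.exists_disjoint_isMaxWeightForest
  suffices key : ∀ e ∈ P, ∀ f ∈ P, ¬ x f < x e from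
    le_antisymm (not_lt.1 (key e he f hf)) (not_lt.1 (key f hf e he))
  intro e he f hf hlt
  induction e using Sym2.ind with | _ u v =>
  have huv : G.Adj u v := hPE he
  set D := G.thresholdComponent x (x s(u, v)) u
  have hD : IsDensest G D := by
    refine ⟨thresholdComponent_connected,
      le_antisymm (density_le_fracArboricity thresholdComponent_connected) ?_⟩
    simpa [hcore] using card_le_density_thresholdComponent hFdisj hF
      ((hx.1 f).trans_lt hlt) huv le_rfl
  rcases hP D hD with hPD | hPD
  · exact hlt.not_ge (le_of_mem_edgeSet_thresholdComponent (hPD hf))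
  · exact (Set.eq_empty_iff_forall_notMem.1 hPD) _ ⟨he, mem_edgeSet_thresholdComponent huv le_rfl⟩

/-- edges in the same prime set (characterized by the generalized
noncrossing property with respect to densest subgraphs) receive the same value in
every core allocation. -/
theorem core_constant_on_prime_set [Fintype V] (G : SimpleGraph V) (hG : G.Connected)
    (hcore : fracArboricity G = (arboricity G.edgeSet : ℝ))
    (P : Set (Sym2 V)) (hPE : P ⊆ G.edgeSet)
    (hP : ∀ H : G.Subgraph, IsDensest G H → P ⊆ H.edgeSet ∨ P ∩ H.edgeSet = ∅)
    (x : Sym2 V → ℝ) (hx : inCore G x) (e f : Sym2 V) (he : e ∈ P) (hf : f ∈ P) :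
    x e = x f :=
  core_constant_on_prime_set_general G hcore P hPE hP x hx e f he hf
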